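/- Suppose all the links of X of dimension ≥ 1 (including X itself) are connected (i.e., for every −1 ≤ k ≤ n−2 and τ ∈ X(k), the underlying graph of X_τ is connected). Then for every 0 ≤ k ≤ n−2: if (n−1−k)·μ_{n−1} < 1 then μ_k ≤ μ_{n−1}/(1 − (n−1−k)·μ_{n−1}); and if ν_{n−1} ≤ 0 then ν_k ≥ ν_{n−1}/(1 − (n−1−k)·ν_{n−1}). -/

import Mathlib

/-!
Framework: a pure `n`-dimensional finite weighted simplicial complex, following
Kaufman–Oppenheim, "High Order Random Walks: Beyond Spectral Gap".

A complex is given by its finset of faces (finsets of a vertex type `V`) together with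
a weight function `m`.  We index levels by **cardinality**: `X.K c` is the set of faces
with `c` elements, i.e. the set `X(k)` of `k`-dimensional faces for `k = c - 1`
(so `X(-1) = X.K 0`, and a pure `n`-dimensional complex has top level `X.K (n+1)`).
-/

noncomputable section

open Finset

/-- The data of a weighted simplicial complex: a finite family of faces and a weight. -/
structure WSC (V : Type*) [DecidableEq V] where
  faces : Finset (Finset V)
  m : Finset V → ℝ

namespace WSC

variable {V : Type*} [DecidableEq V]

/-- `X.IsWSC n` : `X` is a pure `n`-dimensional finite weighted simplicial complex:
the faces form a nonempty downward-closed family, every face is contained in a face with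
`n+1` elements (and no face has more), the weights are positive, and the weight of every
face of cardinality `≤ n` is the sum of the weights of the faces covering it. -/
def IsWSC (X : WSC V) (n : ℕ) : Prop :=
  ∅ ∈ X.faces ∧
  (∀ ⦃σ τ : Finset V⦄, σ ∈ X.faces → τ ⊆ σ → τ ∈ X.faces) ∧
  (∀ ⦃σ⦄, σ ∈ X.faces → σ.card ≤ n + 1) ∧
  (∀ ⦃σ⦄, σ ∈ X.faces → ∃ η ∈ X.faces, σ ⊆ η ∧ η.card = n + 1) ∧
  (∀ ⦃σ⦄, σ ∈ X.faces → 0 < X.m σ) ∧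
  (∀ ⦃τ⦄, τ ∈ X.faces → τ.card ≤ n →
    X.m τ = ∑ σ ∈ X.faces.filter (fun σ => τ ⊆ σ ∧ σ.card = τ.card + 1), X.m σ)

/-- `X.K c` : the faces with `c` elements, i.e. `X(c-1)` in dimension indexing. -/
def K (X : WSC V) (c : ℕ) : Finset (Finset V) := X.faces.filter (fun σ => σ.card = c)

/-- The weighted inner product on cochains supported on the faces with `c` elements. -/
def inn (X : WSC V) (c : ℕ) (φ ψ : Finset V → ℝ) : ℝ :=
  ∑ σ ∈ X.K c, X.m σ * (φ σ * ψ σ)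

/-- The squared norm of a cochain on the faces with `c` elements. -/
def normSq (X : WSC V) (c : ℕ) (φ : Finset V → ℝ) : ℝ := X.inn c φ φ

/-- The norm of a cochain on the faces with `c` elements. -/
def norm (X : WSC V) (c : ℕ) (φ : Finset V → ℝ) : ℝ := Real.sqrt (X.normSq c φ)

/-- `X.cochainZero c φ` : φ belongs to `C^{c-1}_0 (X, ℝ)`, i.e. it is orthogonal to the
constant functions at level `c`. -/
def cochainZero (X : WSC V) (c : ℕ) (φ : Finset V → ℝ) : Prop :=
  ∑ σ ∈ X.K c, X.m σ * φ σ = 0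

/-- The signless differential, from cochains at level `c` to cochains at level `c+1`:
`(d φ)(σ) = ∑_{τ ∈ X(c-1), τ ⊂ σ} φ(τ)`. -/
def d (X : WSC V) (c : ℕ) (φ : Finset V → ℝ) : Finset V → ℝ :=
  fun σ => ∑ τ ∈ (X.K c).filter (fun τ => τ ⊆ σ), φ τ

/-- The (explicit formula for the) adjoint of the signless differential, from cochains at
level `c+1` to cochains at level `c`: `(d* ψ)(τ) = ∑_{σ ⊇ τ} (m σ / m τ) ψ(σ)`. -/
def dStar (X : WSC V) (c : ℕ) (ψ : Finset V → ℝ) : Finset V → ℝ :=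
  fun τ => ∑ σ ∈ (X.K (c + 1)).filter (fun σ => τ ⊆ σ), (X.m σ / X.m τ) * ψ σ

/-- The (lazy) upper random walk operator `M⁺` on cochains at level `c`
(i.e. on `k`-cochains for `k = c-1`; note `k + 2 = c + 1`). -/
def Mup (X : WSC V) (c : ℕ) (φ : Finset V → ℝ) : Finset V → ℝ :=
  fun τ => (1 / ((c : ℝ) + 1)) * φ τ +
    ∑ τ' ∈ (X.K c).filter (fun τ' => τ ∪ τ' ∈ X.K (c + 1)),
      (X.m (τ ∪ τ') / (((c : ℝ) + 1) * X.m τ)) * φ τ'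

/-- The lower random walk operator `M⁻` on cochains at level `c`
(i.e. on `k`-cochains for `k = c-1`; note `k + 1 = c`). -/
def Mdown (X : WSC V) (c : ℕ) (φ : Finset V → ℝ) : Finset V → ℝ :=
  fun τ => (∑ η ∈ (X.K (c - 1)).filter (fun η => η ⊆ τ), X.m τ / ((c : ℝ) * X.m η)) * φ τ +
    ∑ τ' ∈ (X.K c).filter (fun τ' => τ' ≠ τ ∧ τ ∩ τ' ∈ X.K (c - 1)),
      (X.m τ' / ((c : ℝ) * X.m (τ ∩ τ'))) * φ τ'

/-- The non-lazy upper random walk operator `(M')⁺ = ((k+2)/(k+1)) M⁺ - (1/(k+1)) I`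
on cochains at level `c = k+1`. -/
def Mup' (X : WSC V) (c : ℕ) (φ : Finset V → ℝ) : Finset V → ℝ :=
  fun τ => (((c : ℝ) + 1) / (c : ℝ)) * X.Mup c φ τ - (1 / (c : ℝ)) * φ τ

/-- The link `X_τ` of a face `τ`, with the induced weight `m_τ (η) = m (τ ∪ η)`. -/
def link (X : WSC V) (τ : Finset V) : WSC V where
  faces := X.faces.filter (fun η => η ∩ τ = ∅ ∧ τ ∪ η ∈ X.faces)
  m := fun η => X.m (τ ∪ η)

/-- The localization `φ_τ (η) = φ (τ ∪ η)` of a cochain `φ` to the link of `τ`. -/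
def localize (φ : Finset V → ℝ) (τ : Finset V) : Finset V → ℝ := fun η => φ (τ ∪ η)

/-- The underlying graph (1-skeleton) of a complex. -/
def skeleton (Y : WSC V) : SimpleGraph {v : V // ({v} : Finset V) ∈ Y.faces} where
  Adj u w := u ≠ w ∧ ({(u : V), (w : V)} : Finset V) ∈ Y.faces
  symm := by
    constructor
    intro u w h
    refine ⟨h.1.symm, ?_⟩
    rw [Finset.pair_comm]
    exact h.2
  loopless := by constructor; intro u h; exact h.1 rfl

/-- All links of `X` of dimension `≥ 1` (including `X` itself, as the link of `∅`)
have a connected underlying graph. -/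
def LinksConnected (X : WSC V) (n : ℕ) : Prop :=
  ∀ c < n, ∀ τ ∈ X.K c, (X.link τ).skeleton.Connected

/-- The second largest eigenvalue of the self-adjoint operator `(M')⁺₀` on `C⁰(Y, ℝ)`,
via its Rayleigh-quotient characterization over the orthogonal complement of the
constant functions (the top eigenfunction). -/
def secondEig (Y : WSC V) : ℝ :=
  sSup {r : ℝ | ∃ ψ : Finset V → ℝ, Y.normSq 1 ψ ≠ 0 ∧
    (∑ v ∈ Y.K 1, Y.m v * ψ v) = 0 ∧ r = Y.inn 1 (Y.Mup' 1 ψ) ψ / Y.normSq 1 ψ}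

/-- The smallest eigenvalue of the self-adjoint operator `(M')⁺₀` on `C⁰(Y, ℝ)`,
via its Rayleigh-quotient characterization. -/
def smallestEig (Y : WSC V) : ℝ :=
  sInf {r : ℝ | ∃ ψ : Finset V → ℝ, Y.normSq 1 ψ ≠ 0 ∧
    r = Y.inn 1 (Y.Mup' 1 ψ) ψ / Y.normSq 1 ψ}

/-- `μ_k = max_{τ ∈ X(k-1)} μ_τ` where `μ_τ` is the second largest eigenvalue of
`(M')⁺_{τ,0}`; faces `τ ∈ X(k-1)` have `k` elements. -/
def mu (X : WSC V) (k : ℕ) : ℝ :=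
  sSup {r : ℝ | ∃ τ ∈ X.K k, r = (X.link τ).secondEig}

/-- `ν_k = min_{τ ∈ X(k-1)} ν_τ` where `ν_τ` is the smallest eigenvalue of
`(M')⁺_{τ,0}`; faces `τ ∈ X(k-1)` have `k` elements. -/
def nu (X : WSC V) (k : ℕ) : ℝ :=
  sInf {r : ℝ | ∃ τ ∈ X.K k, r = (X.link τ).smallestEig}

/-- `X` is a one-sided `λ`-local spectral expander: `μ_k ≤ λ` for every `0 ≤ k ≤ n-1`. -/
def OneSided (X : WSC V) (n : ℕ) (lam : ℝ) : Prop := ∀ k < n, X.mu k ≤ lam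

/-- `X` is a two-sided `λ`-local spectral expander: `μ_k ≤ λ` and `ν_k ≥ -λ`
for every `0 ≤ k ≤ n-1`. -/
def TwoSided (X : WSC V) (n : ℕ) (lam : ℝ) : Prop :=
  ∀ k < n, X.mu k ≤ lam ∧ -lam ≤ X.nu k

end WSC

/-!
Oppenheim's trickle-down argument. Let `φ` be an eigenfunction of `(M')⁺₀` on a complex `Y`
of dimension `≥ 2`, with eigenvalue `μ`. Garland's method splits `⟨(M')⁺₀ φ, φ⟩` and `‖φ‖²`
into sums over the vertices `v` of the same quantities in the links `Y_v`, and the mean of `φ`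
over `Y_v` is `μ φ(v)`. Centering `φ` in each link therefore gives
`(μ - μ²)‖φ‖² ≤ λ (1 - μ²)‖φ‖²` when the links have second eigenvalue `≤ λ`, while connectivity
of `Y` forces `μ < 1` for `φ ⊥ 1`; hence `μ ≤ λ / (1 - λ)`. The smallest eigenvalue is handled
the same way with the inequalities reversed. Applied to the links of all faces of `X`, this
lowers the dimension by one at the cost of `x ↦ x / (1 - x)`, whose `t`-th iterate is
`x ↦ x / (1 - t x)`. The spectral input, that the Rayleigh quotients of a symmetric operator lie
between its extreme eigenvalues, is transported to weighted cochains by rescaling them by `√m`.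
-/

open scoped RealInnerProductSpace

namespace LinearMap.IsSymmetric

variable {E : Type*} [NormedAddCommGroup E] [InnerProductSpace ℝ E] [FiniteDimensional ℝ E]
  {T : E →ₗ[ℝ] E}

theorem inner_le_of_forall_hasEigenvalue_le (hT : T.IsSymmetric) {c : ℝ}
    (h : ∀ μ, Module.End.HasEigenvalue T μ → μ ≤ c) (x : E) :
    ⟪T x, x⟫ ≤ c * ‖x‖ ^ 2 := by
  rcases eq_or_ne x 0 with rfl | hx
  · simp
  have : Nontrivial E := ⟨⟨x, 0, hx⟩⟩
  have hbdd : BddAbove (Set.range fun y : {y : E // y ≠ 0} => ⟪T y, y⟫ / ‖(y : E)‖ ^ 2) :=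
    ⟨‖LinearMap.toContinuousLinearMap T‖, by
      rintro _ ⟨y, rfl⟩
      exact (le_abs_self _).trans
        ((LinearMap.toContinuousLinearMap T).rayleighQuotient_le_norm y)⟩
  have hsup := (le_ciSup hbdd ⟨x, hx⟩).trans (h _ hT.hasEigenvalue_iSup_of_finiteDimensional)
  rwa [div_le_iff₀ (by positivity)] at hsup

theorem inner_le_of_eigenvalue_le (hT : T.IsSymmetric) {K : Submodule ℝ E}
    (hK : ∀ x ∈ K, T x ∈ K) {c : ℝ} (h : ∀ x ∈ K, x ≠ 0 → ∀ μ : ℝ, T x = μ • x → μ ≤ c)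
    {x : E} (hx : x ∈ K) : ⟪T x, x⟫ ≤ c * ‖x‖ ^ 2 := by
  refine (hT.restrict_invariant hK).inner_le_of_forall_hasEigenvalue_le (fun μ hμ => ?_) ⟨x, hx⟩
  obtain ⟨y, hy⟩ := hμ.exists_hasEigenvector
  exact h y y.2 (by simpa using hy.2) μ (congrArg Subtype.val hy.apply_eq_smul)

theorem le_inner_of_le_eigenvalue (hT : T.IsSymmetric) {K : Submodule ℝ E}
    (hK : ∀ x ∈ K, T x ∈ K) {c : ℝ} (h : ∀ x ∈ K, x ≠ 0 → ∀ μ : ℝ, T x = μ • x → c ≤ μ)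
    {x : E} (hx : x ∈ K) : c * ‖x‖ ^ 2 ≤ ⟪T x, x⟫ := by
  have hneg : (-T).IsSymmetric := fun x y => by simp [hT x y]
  have := hneg.inner_le_of_eigenvalue_le (fun y hy => K.neg_mem (hK y hy)) (c := -c)
    (fun y hy hy0 μ hμ => le_neg.2 (h y hy hy0 (-μ) (by simpa [neg_eq_iff_eq_neg] using hμ))) hx
  simp only [LinearMap.neg_apply, inner_neg_left] at this
  linarith

end LinearMap.IsSymmetric

/-- `x ↦ x / (1 - x)` iterated `t` times sends `x` to `x / (1 - t x)`. -/
theorem div_one_sub_div_one_sub_mul {x t : ℝ} (h : 1 - t * x ≠ 0) :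
    x / (1 - t * x) / (1 - x / (1 - t * x)) = x / (1 - (t + 1) * x) := by
  rw [one_sub_div h, div_div_div_cancel_right₀ h]
  ring_nf

theorem le_div_one_sub_mul_of_step {b : ℕ → ℝ} {m : ℕ}
    (hstep : ∀ j < m, ∀ lam < 1, b j ≤ lam → b (j + 1) ≤ lam / (1 - lam)) :
    ∀ j ≤ m, (j : ℝ) * b 0 < 1 → b j ≤ b 0 / (1 - j * b 0) := by
  intro j
  induction j with
  | zero => simp
  | succ j ih =>
    intro hj h
    push_cast at h
    have hpos : 0 < 1 - j * b 0 := by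
      rcases le_or_gt 0 (b 0) with h0 | h0 <;> nlinarith
    have := hstep j (by omega) _ (by rw [div_lt_one hpos]; linarith) (ih (by omega) (by linarith))
    rw [div_one_sub_div_one_sub_mul hpos.ne'] at this
    exact_mod_cast this

theorem div_one_sub_mul_le_of_step {b : ℕ → ℝ} {m : ℕ}
    (hstep : ∀ j < m, ∀ lam ≤ 0, lam ≤ b j → lam / (1 - lam) ≤ b (j + 1)) (h : b 0 ≤ 0) :
    ∀ j ≤ m, b 0 / (1 - j * b 0) ≤ b j := by
  intro j
  induction j with
  | zero => simp
  | succ j ih =>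
    intro hj
    have hpos : 0 < 1 - j * b 0 := by nlinarith [j.cast_nonneg (α := ℝ)]
    have := hstep j (by omega) _ (div_nonpos_of_nonpos_of_nonneg h hpos.le) (ih (by omega))
    rw [div_one_sub_div_one_sub_mul hpos.ne'] at this
    exact_mod_cast this

namespace WSC

variable {V : Type*} [DecidableEq V] {X : WSC V} {n c : ℕ} {σ σ' τ η η' v : Finset V}

theorem mem_K : σ ∈ X.K c ↔ σ ∈ X.faces ∧ σ.card = c := mem_filter

theorem m_pos (hX : X.IsWSC n) (hσ : σ ∈ X.K c) : 0 < X.m σ := hX.2.2.2.2.1 (mem_K.1 hσ).1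

theorem K_nonempty (hX : X.IsWSC n) (hc : c ≤ n + 1) : (X.K c).Nonempty := by
  obtain ⟨η, hη, -, hcard⟩ := hX.2.2.2.1 hX.1
  obtain ⟨σ, hση, rfl⟩ := exists_subset_card_eq (hcard ▸ hc)
  exact ⟨σ, mem_K.2 ⟨hX.2.1 hη hση, rfl⟩⟩

theorem sum_K_one (hX : X.IsWSC n) : ∑ v ∈ X.K 1, X.m v = X.m ∅ := by
  rw [hX.2.2.2.2.2 hX.1 (Nat.zero_le n)]
  simp [K]

theorem mem_link_faces :
    η ∈ (X.link τ).faces ↔ η ∈ X.faces ∧ Disjoint η τ ∧ τ ∪ η ∈ X.faces := by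
  simp [link, disjoint_iff_inter_eq_empty]

theorem mem_link_K :
    η ∈ (X.link τ).K c ↔ η ∈ X.K c ∧ Disjoint η τ ∧ τ ∪ η ∈ X.faces := by
  simp only [mem_K, mem_link_faces]
  tauto

theorem link_m : (X.link τ).m η = X.m (τ ∪ η) := rfl

theorem sdiff_mem_link_faces (hX : X.IsWSC n) (hσ : σ ∈ X.faces) (hτσ : τ ⊆ σ) :
    σ \ τ ∈ (X.link τ).faces :=
  mem_link_faces.2 ⟨hX.2.1 hσ sdiff_subset, sdiff_disjoint, by rwa [union_sdiff_of_subset hτσ]⟩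

/-- The cofaces of `η` in `X_τ` correspond to the cofaces of `τ ∪ η` in `X` via `η' ↦ τ ∪ η'`. -/
theorem link_m_eq_sum (hX : X.IsWSC n) (hη : η ∈ (X.link τ).faces)
    (hcard : (τ ∪ η).card ≤ n) :
    (X.link τ).m η = ∑ η' ∈ (X.link τ).faces.filter (fun η' => η ⊆ η' ∧ η'.card = η.card + 1),
      (X.link τ).m η' := by
  obtain ⟨-, hητ, hτη⟩ := mem_link_faces.1 hη
  rw [link_m, hX.2.2.2.2.2 hτη hcard, card_union_of_disjoint hητ.symm]
  refine sum_nbij' (· \ τ) (τ ∪ ·) (fun σ hσ => ?_) (fun η' hη' => ?_) (fun σ hσ => ?_)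
    (fun η' hη' => ?_) (fun σ hσ => ?_)
  · obtain ⟨hσ, hsub, hσcard⟩ := mem_filter.1 hσ
    have hτσ : τ ⊆ σ := union_subset_left hsub
    refine mem_filter.2 ⟨sdiff_mem_link_faces hX hσ hτσ,
      subset_sdiff.2 ⟨union_subset_right hsub, hητ⟩, ?_⟩
    rw [card_sdiff_of_subset hτσ]
    omega
  · obtain ⟨hη', hsub, hη'card⟩ := mem_filter.1 hη'
    obtain ⟨-, hη'τ, hτη'⟩ := mem_link_faces.1 hη'
    exact mem_filter.2 ⟨hτη', union_subset_union_right hsub,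
      by rw [card_union_of_disjoint hη'τ.symm]; omega⟩
  · exact union_sdiff_of_subset (union_subset_left (mem_filter.1 hσ).2.1)
  · exact union_sdiff_cancel_left (mem_link_faces.1 (mem_filter.1 hη').1).2.1.symm
  · rw [link_m, union_sdiff_of_subset (union_subset_left (mem_filter.1 hσ).2.1)]

theorem link_isWSC (hX : X.IsWSC n) (hτ : τ ∈ X.K c) (hc : c ≤ n) :
    (X.link τ).IsWSC (n - c) := by
  obtain ⟨hτX, rfl⟩ := mem_K.1 hτ
  refine ⟨mem_link_faces.2 ⟨hX.1, disjoint_empty_left _, by simpa⟩, fun σ η hσ hησ => ?_,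
    fun η hη => ?_, fun η hη => ?_, fun η hη => hX.2.2.2.2.1 (mem_link_faces.1 hη).2.2,
    fun η hη hηcard => link_m_eq_sum hX hη ?_⟩
  · obtain ⟨h1, h2, h3⟩ := mem_link_faces.1 hσ
    exact mem_link_faces.2 ⟨hX.2.1 h1 hησ, h2.mono_left hησ,
      hX.2.1 h3 (union_subset_union_right hησ)⟩
  · obtain ⟨-, h2, h3⟩ := mem_link_faces.1 hη
    have := hX.2.2.1 h3
    rw [card_union_of_disjoint h2.symm] at this
    omega
  · obtain ⟨-, h2, h3⟩ := mem_link_faces.1 hη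
    obtain ⟨σ, hσ, hsub, hσcard⟩ := hX.2.2.2.1 h3
    have hτσ : τ ⊆ σ := union_subset_left hsub
    refine ⟨σ \ τ, sdiff_mem_link_faces hX hσ hτσ,
      subset_sdiff.2 ⟨union_subset_right hsub, h2⟩, ?_⟩
    rw [card_sdiff_of_subset hτσ]
    omega
  · rw [card_union_of_disjoint (mem_link_faces.1 hη).2.1.symm]
    omega

theorem ext {A B : WSC V} (hfaces : A.faces = B.faces) (hm : A.m = B.m) : A = B := by
  cases A
  cases B
  simp_all

theorem link_link (hX : X.IsWSC n) (hη : η ∈ (X.link τ).faces) :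
    (X.link τ).link η = X.link (τ ∪ η) := by
  obtain ⟨-, hητ, -⟩ := mem_link_faces.1 hη
  refine ext ?_ (funext fun σ => by simp [link_m, union_assoc])
  ext σ
  simp only [mem_link_faces, disjoint_union_right, union_assoc]
  constructor
  · rintro ⟨⟨hσ, hστ, -⟩, hση, -, -, h⟩
    exact ⟨hσ, ⟨hστ, hση⟩, h⟩
  · rintro ⟨hσ, ⟨hστ, hση⟩, h⟩
    exact ⟨⟨hσ, hστ, hX.2.1 h (union_subset_union_right subset_union_right)⟩, hση,
      hX.2.1 h subset_union_right, disjoint_union_left.2 ⟨hητ, hστ⟩, h⟩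

def edgeWeight (X : WSC V) (σ σ' : Finset V) : ℝ :=
  if σ ∪ σ' ∈ X.K 2 then X.m (σ ∪ σ') else 0

def edgeForm (X : WSC V) (φ : Finset V → ℝ) : ℝ :=
  ∑ σ ∈ X.K 1, ∑ σ' ∈ X.K 1, X.edgeWeight σ σ' * (φ σ * φ σ')

theorem edgeWeight_comm (X : WSC V) (σ σ' : Finset V) :
    X.edgeWeight σ σ' = X.edgeWeight σ' σ := by
  rw [edgeWeight, edgeWeight, union_comm]

theorem edgeWeight_nonneg (hX : X.IsWSC n) (σ σ' : Finset V) : 0 ≤ X.edgeWeight σ σ' := by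
  unfold edgeWeight
  split_ifs with h
  exacts [(m_pos hX h).le, le_rfl]

theorem Mup'_one_apply (X : WSC V) (φ : Finset V → ℝ) (σ : Finset V) :
    X.Mup' 1 φ σ = ∑ σ' ∈ X.K 1, X.edgeWeight σ σ' / X.m σ * φ σ' := by
  simp only [Mup', Mup, edgeWeight, ite_div, zero_div, ite_mul, zero_mul, ← sum_filter,
    mul_add, mul_sum]
  push_cast
  ring_nf
  refine sum_congr rfl fun σ' _ => ?_
  rcases eq_or_ne (X.m σ) 0 with h | h <;> field_simp [h]

theorem union_mem_K_two_iff (hσ : σ ∈ X.K 1) (hη : η ∈ X.K 1) :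
    σ ∪ η ∈ X.K 2 ↔ Disjoint η σ ∧ σ ∪ η ∈ X.faces := by
  have h := card_union_add_card_inter σ η
  rw [(mem_K.1 hσ).2, (mem_K.1 hη).2] at h
  rw [mem_K, disjoint_comm, disjoint_iff_inter_eq_empty, ← card_eq_zero]
  constructor
  · rintro ⟨h1, h2⟩
    exact ⟨by omega, h1⟩
  · rintro ⟨h1, h2⟩
    exact ⟨h2, by omega⟩

theorem link_K_one (hσ : σ ∈ X.K 1) :
    (X.link σ).K 1 = (X.K 1).filter (fun η => σ ∪ η ∈ X.K 2) := by
  ext η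
  rw [mem_link_K, mem_filter]
  constructor
  · rintro ⟨hη, h⟩
    exact ⟨hη, (union_mem_K_two_iff hσ hη).2 h⟩
  · rintro ⟨hη, h⟩
    exact ⟨hη, (union_mem_K_two_iff hσ hη).1 h⟩

theorem sum_edgeWeight (hX : X.IsWSC n) (hn : 1 ≤ n) (hσ : σ ∈ X.K 1) :
    ∑ σ' ∈ X.K 1, X.edgeWeight σ σ' = X.m σ := by
  have hlink := sum_K_one (link_isWSC hX hσ hn)
  rwa [link_K_one hσ, sum_filter, link_m, union_empty] at hlink

/-- Each edge `η ∪ η'` is counted once in the link of every vertex of the triangles on it. -/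
theorem sum_link_edgeWeight (hX : X.IsWSC n) (hn : 2 ≤ n) (η η' : Finset V) :
    ∑ v ∈ X.K 1, (X.link v).edgeWeight η η' = X.edgeWeight η η' := by
  by_cases he : η ∪ η' ∈ X.K 2
  · have hlink := sum_K_one (link_isWSC hX he hn)
    have hK : (X.link (η ∪ η')).K 1 = (X.K 1).filter (fun v => η ∪ η' ∈ (X.link v).K 2) := by
      ext v
      simp only [mem_filter, mem_link_K, disjoint_comm (a := η ∪ η'), union_comm v]
      tauto
    simp only [hK, sum_filter, link_m, union_empty] at hlink
    simp only [edgeWeight, link_m, if_pos he, ← hlink]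
    exact sum_congr rfl fun v _ => by rw [union_comm v]
  · rw [edgeWeight, if_neg he]
    refine sum_eq_zero fun v _ => ?_
    rw [edgeWeight, if_neg fun h => he (mem_link_K.1 h).1]

theorem sum_sum_edgeWeight_mul_left (hX : X.IsWSC n) (hn : 1 ≤ n) (f : Finset V → ℝ) :
    ∑ σ ∈ X.K 1, ∑ σ' ∈ X.K 1, X.edgeWeight σ σ' * f σ = ∑ σ ∈ X.K 1, X.m σ * f σ :=
  sum_congr rfl fun σ hσ => by rw [← sum_mul, sum_edgeWeight hX hn hσ]

theorem sum_sum_edgeWeight_mul_right (hX : X.IsWSC n) (hn : 1 ≤ n) (f : Finset V → ℝ) :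
    ∑ σ ∈ X.K 1, ∑ σ' ∈ X.K 1, X.edgeWeight σ σ' * f σ' = ∑ σ ∈ X.K 1, X.m σ * f σ := by
  rw [sum_comm]
  simp_rw [X.edgeWeight_comm _ (_ : Finset V)]
  exact sum_sum_edgeWeight_mul_left hX hn f

theorem inn_Mup'_self (hX : X.IsWSC n) (φ : Finset V → ℝ) :
    X.inn 1 (X.Mup' 1 φ) φ = X.edgeForm φ := by
  refine sum_congr rfl fun σ hσ => ?_
  have := (m_pos hX hσ).ne'
  rw [Mup'_one_apply, sum_mul, mul_sum]
  exact sum_congr rfl fun σ' _ => by field_simp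

theorem sum_sum_edgeWeight_mul_add_sq (hX : X.IsWSC n) (hn : 1 ≤ n) (φ : Finset V → ℝ)
    (t : ℝ) :
    ∑ σ ∈ X.K 1, ∑ σ' ∈ X.K 1, X.edgeWeight σ σ' * (φ σ + t * φ σ') ^ 2
      = (1 + t ^ 2) * X.normSq 1 φ + 2 * t * X.edgeForm φ := by
  have hexp : ∀ σ σ', X.edgeWeight σ σ' * (φ σ + t * φ σ') ^ 2
      = X.edgeWeight σ σ' * (φ σ * φ σ) + t ^ 2 * (X.edgeWeight σ σ' * (φ σ' * φ σ'))
        + 2 * t * (X.edgeWeight σ σ' * (φ σ * φ σ')) := fun _ _ => by ring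
  simp only [hexp, sum_add_distrib, ← mul_sum, sum_sum_edgeWeight_mul_left hX hn,
    sum_sum_edgeWeight_mul_right hX hn (fun σ => φ σ * φ σ), normSq, inn, edgeForm]
  ring

theorem abs_edgeForm_le (hX : X.IsWSC n) (hn : 1 ≤ n) (φ : Finset V → ℝ) :
    |X.edgeForm φ| ≤ X.normSq 1 φ := by
  have hnonneg : ∀ t : ℝ, 0 ≤ (1 + t ^ 2) * X.normSq 1 φ + 2 * t * X.edgeForm φ := fun t => by
    rw [← sum_sum_edgeWeight_mul_add_sq hX hn]
    exact sum_nonneg fun σ _ => sum_nonneg fun σ' _ =>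
      mul_nonneg (edgeWeight_nonneg hX σ σ') (sq_nonneg _)
  have h1 := hnonneg 1
  have h2 := hnonneg (-1)
  rw [abs_le]
  constructor <;> linarith

theorem sum_mul_sub_const (X : WSC V) (φ : Finset V → ℝ) (c : ℝ) :
    ∑ σ ∈ X.K 1, X.m σ * (φ σ - c) = ∑ σ ∈ X.K 1, X.m σ * φ σ - c * ∑ σ ∈ X.K 1, X.m σ := by
  rw [mul_sum, ← sum_sub_distrib]
  exact sum_congr rfl fun _ _ => by ring

theorem normSq_sub_const (hX : X.IsWSC n) (φ : Finset V → ℝ) (c : ℝ) :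
    X.normSq 1 (fun σ => φ σ - c)
      = X.normSq 1 φ - 2 * c * ∑ σ ∈ X.K 1, X.m σ * φ σ + c ^ 2 * X.m ∅ := by
  simp only [normSq, inn, ← sum_K_one hX, mul_sum, ← sum_sub_distrib, ← sum_add_distrib]
  exact sum_congr rfl fun _ _ => by ring

theorem edgeForm_sub_const (hX : X.IsWSC n) (hn : 1 ≤ n) (φ : Finset V → ℝ) (c : ℝ) :
    X.edgeForm (fun σ => φ σ - c)
      = X.edgeForm φ - 2 * c * ∑ σ ∈ X.K 1, X.m σ * φ σ + c ^ 2 * X.m ∅ := by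
  have hexp : ∀ σ σ', X.edgeWeight σ σ' * ((φ σ - c) * (φ σ' - c))
      = X.edgeWeight σ σ' * (φ σ * φ σ') - c * (X.edgeWeight σ σ' * φ σ)
        - c * (X.edgeWeight σ σ' * φ σ') + c ^ 2 * X.edgeWeight σ σ' := fun _ _ => by ring
  have hdeg : ∑ σ ∈ X.K 1, ∑ σ' ∈ X.K 1, X.edgeWeight σ σ' = X.m ∅ := by
    rw [← sum_K_one hX]
    exact sum_congr rfl fun σ hσ => sum_edgeWeight hX hn hσ
  simp only [edgeForm, hexp, sum_add_distrib, sum_sub_distrib, ← mul_sum,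
    sum_sum_edgeWeight_mul_left hX hn, sum_sum_edgeWeight_mul_right hX hn, hdeg]
  ring

theorem normSq_nonneg (hX : X.IsWSC n) (φ : Finset V → ℝ) : 0 ≤ X.normSq 1 φ :=
  sum_nonneg fun _ hσ => mul_nonneg (m_pos hX hσ).le (mul_self_nonneg _)

theorem abs_edgeForm_div_normSq_le_one (hX : X.IsWSC n) (hn : 1 ≤ n) (φ : Finset V → ℝ) :
    |X.edgeForm φ / X.normSq 1 φ| ≤ 1 := by
  rw [abs_div, abs_of_nonneg (normSq_nonneg hX φ)]
  exact div_le_one_of_le₀ (abs_edgeForm_le hX hn φ) (normSq_nonneg hX φ)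

theorem edgeForm_eq_of_eigen (hX : X.IsWSC n) {φ : Finset V → ℝ} {μ : ℝ}
    (hφ : ∀ σ ∈ X.K 1, X.Mup' 1 φ σ = μ * φ σ) : X.edgeForm φ = μ * X.normSq 1 φ := by
  rw [← inn_Mup'_self hX, normSq, inn, inn, mul_sum]
  exact sum_congr rfl fun σ hσ => by rw [hφ σ hσ]; ring

theorem eq_of_connected (hconn : X.skeleton.Connected) {φ : Finset V → ℝ}
    (hedge : ∀ σ ∈ X.K 1, ∀ σ' ∈ X.K 1, σ ∪ σ' ∈ X.K 2 → φ σ = φ σ')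
    (hσ : σ ∈ X.K 1) (hσ' : σ' ∈ X.K 1) : φ σ = φ σ' := by
  have hwalk : ∀ p q (w : X.skeleton.Walk p q), φ {(p : V)} = φ {(q : V)} := by
    intro p q w
    induction w with
    | nil => rfl
    | @cons a b _ hab _ ih =>
      refine (hedge _ (mem_K.2 ⟨a.2, card_singleton _⟩) _ (mem_K.2 ⟨b.2, card_singleton _⟩)
        (mem_K.2 ⟨?_, ?_⟩)).trans ih
      · rw [← insert_eq]
        exact hab.2
      · rw [← insert_eq, card_pair (fun h => hab.1 (Subtype.ext h))]
  obtain ⟨p, rfl⟩ := card_eq_one.1 (mem_K.1 hσ).2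
  obtain ⟨q, rfl⟩ := card_eq_one.1 (mem_K.1 hσ').2
  obtain ⟨w⟩ := hconn.preconnected ⟨p, (mem_K.1 hσ).1⟩ ⟨q, (mem_K.1 hσ').1⟩
  exact hwalk _ _ w

/-- On a connected complex only the constant cochains attain `⟨(M')⁺₀ φ, φ⟩ = ‖φ‖²`, since the
difference of the two is the Dirichlet energy `½ ∑ m(σσ') (φ σ - φ σ')²`. -/
theorem eq_of_normSq_le_edgeForm (hX : X.IsWSC n) (hn : 1 ≤ n) (hconn : X.skeleton.Connected)
    {φ : Finset V → ℝ} (h : X.normSq 1 φ ≤ X.edgeForm φ) (hσ : σ ∈ X.K 1)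
    (hσ' : σ' ∈ X.K 1) : φ σ = φ σ' := by
  have hterm : ∀ σ ∈ X.K 1, ∀ σ' ∈ X.K 1, 0 ≤ X.edgeWeight σ σ' * (φ σ + -1 * φ σ') ^ 2 :=
    fun σ _ σ' _ => mul_nonneg (edgeWeight_nonneg hX σ σ') (sq_nonneg _)
  have hzero : ∑ σ ∈ X.K 1, ∑ σ' ∈ X.K 1, X.edgeWeight σ σ' * (φ σ + -1 * φ σ') ^ 2 = 0 := by
    refine le_antisymm ?_ (sum_nonneg fun σ hσ => sum_nonneg (hterm σ hσ))
    rw [sum_sum_edgeWeight_mul_add_sq hX hn]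
    linarith
  refine eq_of_connected hconn (fun σ hσ σ' hσ' he => ?_) hσ hσ'
  have := (sum_eq_zero_iff_of_nonneg (hterm σ hσ)).1
    ((sum_eq_zero_iff_of_nonneg fun σ hσ => sum_nonneg (hterm σ hσ)).1 hzero σ hσ) σ' hσ'
  rw [edgeWeight, if_pos he, mul_eq_zero, or_iff_right (m_pos hX he).ne', sq_eq_zero_iff] at this
  linarith

theorem eigenvalue_lt_one (hX : X.IsWSC n) (hn : 1 ≤ n) (hconn : X.skeleton.Connected)
    {φ : Finset V → ℝ} (hφ0 : ∑ σ ∈ X.K 1, X.m σ * φ σ = 0) (hN : X.normSq 1 φ ≠ 0) {μ : ℝ}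
    (hφ : ∀ σ ∈ X.K 1, X.Mup' 1 φ σ = μ * φ σ) : μ < 1 := by
  by_contra! hμ
  have hconst : ∀ σ ∈ X.K 1, ∀ σ' ∈ X.K 1, φ σ = φ σ' := fun σ hσ σ' hσ' =>
    eq_of_normSq_le_edgeForm hX hn hconn (by
      rw [edgeForm_eq_of_eigen hX hφ]
      nlinarith [normSq_nonneg hX φ]) hσ hσ'
  obtain ⟨σ₀, hσ₀⟩ := K_nonempty hX (c := 1) (by omega)
  have hφσ₀ : φ σ₀ = 0 := by
    rw [sum_congr rfl fun σ hσ => by rw [hconst σ hσ σ₀ hσ₀], ← sum_mul, sum_K_one hX] at hφ0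
    exact (mul_eq_zero.1 hφ0).resolve_left (hX.2.2.2.2.1 hX.1).ne'
  exact hN (sum_eq_zero fun σ hσ => by rw [hconst σ hσ σ₀ hσ₀, hφσ₀]; ring)

theorem edgeForm_le_of_secondEig_le (hX : X.IsWSC n) (hn : 1 ≤ n) {lam : ℝ}
    (h : X.secondEig ≤ lam) {φ : Finset V → ℝ} (hφ0 : ∑ σ ∈ X.K 1, X.m σ * φ σ = 0) :
    X.edgeForm φ ≤ lam * X.normSq 1 φ := by
  rcases (normSq_nonneg hX φ).eq_or_lt' with hN | hN
  · have := abs_edgeForm_le hX hn φ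
    rw [hN] at this ⊢
    linarith [le_abs_self (X.edgeForm φ)]
  have hbdd : BddAbove {r : ℝ | ∃ ψ : Finset V → ℝ, X.normSq 1 ψ ≠ 0 ∧
      (∑ v ∈ X.K 1, X.m v * ψ v) = 0 ∧ r = X.inn 1 (X.Mup' 1 ψ) ψ / X.normSq 1 ψ} := by
    refine ⟨1, ?_⟩
    rintro _ ⟨ψ, -, -, rfl⟩
    rw [inn_Mup'_self hX]
    exact (le_abs_self _).trans (abs_edgeForm_div_normSq_le_one hX hn ψ)
  have := (le_csSup hbdd ⟨φ, hN.ne', hφ0, rfl⟩).trans h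
  rwa [inn_Mup'_self hX, div_le_iff₀ hN] at this

theorem le_edgeForm_of_le_smallestEig (hX : X.IsWSC n) (hn : 1 ≤ n) {lam : ℝ}
    (h : lam ≤ X.smallestEig) (φ : Finset V → ℝ) : lam * X.normSq 1 φ ≤ X.edgeForm φ := by
  rcases (normSq_nonneg hX φ).eq_or_lt' with hN | hN
  · have := abs_edgeForm_le hX hn φ
    rw [hN] at this ⊢
    linarith [neg_abs_le (X.edgeForm φ)]
  have hbdd : BddBelow {r : ℝ | ∃ ψ : Finset V → ℝ, X.normSq 1 ψ ≠ 0 ∧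
      r = X.inn 1 (X.Mup' 1 ψ) ψ / X.normSq 1 ψ} := by
    refine ⟨-1, ?_⟩
    rintro _ ⟨ψ, -, rfl⟩
    rw [inn_Mup'_self hX]
    exact neg_le_of_abs_le (abs_edgeForm_div_normSq_le_one hX hn ψ)
  have := h.trans (csInf_le hbdd ⟨φ, hN.ne', rfl⟩)
  rwa [inn_Mup'_self hX, le_div_iff₀ hN] at this

theorem link_K_one_subset (X : WSC V) (v : Finset V) : (X.link v).K 1 ⊆ X.K 1 :=
  fun _ hη => (mem_link_K.1 hη).1

theorem sum_link_normSq (hX : X.IsWSC n) (hn : 1 ≤ n) (φ : Finset V → ℝ) :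
    ∑ v ∈ X.K 1, (X.link v).normSq 1 φ = X.normSq 1 φ := by
  have hlink : ∀ v ∈ X.K 1, (X.link v).normSq 1 φ
      = ∑ η ∈ X.K 1, X.edgeWeight v η * (φ η * φ η) := fun v hv => by
    rw [normSq, inn, link_K_one hv, sum_filter]
    exact sum_congr rfl fun η _ => by unfold edgeWeight; split_ifs <;> simp [link_m]
  rw [sum_congr rfl hlink, sum_sum_edgeWeight_mul_right hX hn]
  rfl

theorem link_edgeForm (hX : X.IsWSC n) (v : Finset V) (φ : Finset V → ℝ) :
    (X.link v).edgeForm φ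
      = ∑ η ∈ X.K 1, ∑ η' ∈ X.K 1, (X.link v).edgeWeight η η' * (φ η * φ η') := by
  have hvertices : ∀ η ∈ X.K 1, ∀ η' ∈ X.K 1, η ∪ η' ∈ (X.link v).K 2 →
      η ∈ (X.link v).K 1 ∧ η' ∈ (X.link v).K 1 := by
    intro η hη η' hη' he
    obtain ⟨-, hdisj, hface⟩ := mem_link_K.1 he
    exact ⟨mem_link_K.2 ⟨hη, hdisj.mono_left subset_union_left,
        hX.2.1 hface (union_subset_union_right subset_union_left)⟩,
      mem_link_K.2 ⟨hη', hdisj.mono_left subset_union_right,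
        hX.2.1 hface (union_subset_union_right subset_union_right)⟩⟩
  refine sum_subset (link_K_one_subset X v) (fun η hη hηv => ?_) |>.trans
    (sum_congr rfl fun η hη => sum_subset (link_K_one_subset X v) fun η' hη' hη'v => ?_)
  · refine sum_eq_zero fun η' hη' => ?_
    rw [edgeWeight, if_neg fun he => hηv (hvertices η hη η' (link_K_one_subset X v hη') he).1,
      zero_mul]
  · rw [edgeWeight, if_neg fun he => hη'v (hvertices η hη η' hη' he).2,
      zero_mul]

theorem sum_link_edgeForm (hX : X.IsWSC n) (hn : 2 ≤ n) (φ : Finset V → ℝ) :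
    ∑ v ∈ X.K 1, (X.link v).edgeForm φ = X.edgeForm φ := by
  rw [sum_congr rfl fun v _ => link_edgeForm hX v φ, sum_comm, edgeForm]
  refine sum_congr rfl fun η _ => ?_
  rw [sum_comm]
  exact sum_congr rfl fun η' _ => by rw [← sum_mul, sum_link_edgeWeight hX hn]

/-- Rescaling by `√m` identifies `C⁰(X, ℝ)` with its weighted inner product with the
Euclidean space on the vertices. -/
def toEuclidean (X : WSC V) (φ : Finset V → ℝ) : EuclideanSpace ℝ (X.K 1) :=
  WithLp.toLp 2 fun v => √(X.m v) * φ v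

/-- The matrix of `(M')⁺₀` in the coordinates of `toEuclidean`. -/
def walkMatrix (X : WSC V) : Matrix (X.K 1) (X.K 1) ℝ :=
  fun u v => X.edgeWeight u v / (√(X.m u) * √(X.m v))

theorem walkMatrix_isHermitian (X : WSC V) : X.walkMatrix.IsHermitian := by
  ext u v
  simp [walkMatrix, X.edgeWeight_comm (u : Finset V), mul_comm]

theorem inner_toEuclidean (hX : X.IsWSC n) (φ ψ : Finset V → ℝ) :
    ⟪X.toEuclidean φ, X.toEuclidean ψ⟫ = X.inn 1 φ ψ := by
  rw [inn, ← sum_coe_sort]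
  simp only [toEuclidean, PiLp.inner_apply, RCLike.inner_apply, conj_trivial]
  refine sum_congr rfl fun v _ => ?_
  have := Real.mul_self_sqrt (m_pos hX v.2).le
  linear_combination (φ v * ψ v) * this

theorem walkMatrix_toEuclidean (hX : X.IsWSC n) (φ : Finset V → ℝ) :
    X.walkMatrix.toEuclideanLin (X.toEuclidean φ) = X.toEuclidean (X.Mup' 1 φ) := by
  ext u
  have hu := Real.sqrt_pos.2 (m_pos hX u.2)
  simp only [toEuclidean, Matrix.toLpLin_toLp, Matrix.toLin'_apply, Matrix.mulVec, dotProduct,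
    walkMatrix, Mup'_one_apply, mul_sum]
  rw [← (X.K 1).sum_coe_sort]
  refine sum_congr rfl fun v _ => ?_
  have hv := Real.sqrt_pos.2 (m_pos hX v.2)
  have hm := (m_pos hX u.2).ne'
  field_simp
  rw [Real.sq_sqrt (m_pos hX u.2).le]
  ring

theorem exists_toEuclidean_eq (hX : X.IsWSC n) (y : EuclideanSpace ℝ (X.K 1)) :
    ∃ φ, X.toEuclidean φ = y := by
  refine ⟨fun σ => if h : σ ∈ X.K 1 then y ⟨σ, h⟩ / √(X.m σ) else 0, ?_⟩
  ext u
  have hu := Real.sqrt_pos.2 (m_pos hX u.2)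
  simp only [toEuclidean, u.2, dif_pos]
  field_simp

theorem normSq_eq_norm_toEuclidean_sq (hX : X.IsWSC n) (φ : Finset V → ℝ) :
    X.normSq 1 φ = ‖X.toEuclidean φ‖ ^ 2 := by
  rw [← real_inner_self_eq_norm_sq, inner_toEuclidean hX, normSq]

theorem Mup'_eq_of_walkMatrix_eq_smul (hX : X.IsWSC n) {φ : Finset V → ℝ} {μ : ℝ}
    (h : X.walkMatrix.toEuclideanLin (X.toEuclidean φ) = μ • X.toEuclidean φ) :
    ∀ σ ∈ X.K 1, X.Mup' 1 φ σ = μ * φ σ := by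
  intro σ hσ
  rw [walkMatrix_toEuclidean hX] at h
  have hσ' := congrArg (fun y => y ⟨σ, hσ⟩) h
  have := Real.sqrt_pos.2 (m_pos hX hσ)
  simp only [toEuclidean, PiLp.smul_apply, smul_eq_mul] at hσ'
  nlinarith

theorem sum_mul_Mup' (hX : X.IsWSC n) (hn : 1 ≤ n) (φ : Finset V → ℝ) :
    ∑ σ ∈ X.K 1, X.m σ * X.Mup' 1 φ σ = ∑ σ ∈ X.K 1, X.m σ * φ σ := by
  rw [← sum_sum_edgeWeight_mul_right hX hn φ]
  refine sum_congr rfl fun σ hσ => ?_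
  have := (m_pos hX hσ).ne'
  rw [Mup'_one_apply, mul_sum]
  exact sum_congr rfl fun σ' _ => by field_simp

theorem exists_sum_eq_zero_normSq_ne_zero (hX : X.IsWSC n) (hn : 1 ≤ n) :
    ∃ φ : Finset V → ℝ, ∑ σ ∈ X.K 1, X.m σ * φ σ = 0 ∧ X.normSq 1 φ ≠ 0 := by
  obtain ⟨e, he⟩ := K_nonempty hX (c := 2) (by omega)
  obtain ⟨a, b, hab, rfl⟩ := card_eq_two.1 (mem_K.1 he).2
  have hvertex : ∀ x ∈ ({a, b} : Finset V), {x} ∈ X.K 1 := fun x hx =>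
    mem_K.2 ⟨hX.2.1 (mem_K.1 he).1 (singleton_subset_iff.2 hx), card_singleton x⟩
  have ha := hvertex a (by simp)
  have hb := hvertex b (by simp)
  have hne : ({a} : Finset V) ≠ {b} := fun h => hab (singleton_injective h)
  set φ : Finset V → ℝ := fun σ => if σ = {a} then X.m {b} else if σ = {b} then -X.m {a} else 0
  have hsupp : ∀ f : ℝ → ℝ → ℝ, (∀ m, f m 0 = 0) → ∑ σ ∈ X.K 1, f (X.m σ) (φ σ)
      = f (X.m {a}) (X.m {b}) + f (X.m {b}) (-X.m {a}) := fun f hf => by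
    rw [sum_eq_add_of_mem _ _ ha hb hne fun σ _ hσ => by simp [φ, hσ.1, hσ.2, hf]]
    simp [φ, hne.symm]
  refine ⟨φ, ?_, ?_⟩
  · rw [hsupp (fun m x => m * x) (by simp)]
    ring
  · rw [normSq, inn, hsupp (fun m x => m * (x * x)) (by simp)]
    have := m_pos hX ha
    have := m_pos hX hb
    rw [neg_mul_neg]
    positivity

theorem secondEig_le_of_eigen (hX : X.IsWSC n) (hn : 1 ≤ n) {c : ℝ}
    (h : ∀ φ : Finset V → ℝ, ∑ σ ∈ X.K 1, X.m σ * φ σ = 0 → X.normSq 1 φ ≠ 0 →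
      ∀ μ : ℝ, (∀ σ ∈ X.K 1, X.Mup' 1 φ σ = μ * φ σ) → μ ≤ c) :
    X.secondEig ≤ c := by
  have hT := Matrix.isSymmetric_toEuclideanLin_iff.2 X.walkMatrix_isHermitian
  set K := (ℝ ∙ X.toEuclidean 1)ᗮ
  have hmemK : ∀ φ, X.toEuclidean φ ∈ K ↔ ∑ σ ∈ X.K 1, X.m σ * φ σ = 0 := fun φ => by
    rw [Submodule.mem_orthogonal_singleton_iff_inner_right, inner_toEuclidean hX]
    simp [inn]
  have hK : ∀ y ∈ K, X.walkMatrix.toEuclideanLin y ∈ K := by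
    intro y hy
    obtain ⟨φ, rfl⟩ := exists_toEuclidean_eq hX y
    rwa [walkMatrix_toEuclidean hX, hmemK, sum_mul_Mup' hX hn, ← hmemK]
  have heig : ∀ y ∈ K, y ≠ 0 → ∀ μ : ℝ, X.walkMatrix.toEuclideanLin y = μ • y → μ ≤ c := by
    intro y hy hy0 μ hμ
    obtain ⟨φ, rfl⟩ := exists_toEuclidean_eq hX y
    exact h φ ((hmemK φ).1 hy) (by simpa [normSq_eq_norm_toEuclidean_sq hX] using hy0) μ
      (Mup'_eq_of_walkMatrix_eq_smul hX hμ)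
  obtain ⟨φ₀, hφ₀⟩ := exists_sum_eq_zero_normSq_ne_zero hX hn
  refine csSup_le ⟨_, φ₀, hφ₀.2, hφ₀.1, rfl⟩ ?_
  rintro _ ⟨φ, hN, hφ0, rfl⟩
  have := hT.inner_le_of_eigenvalue_le hK heig ((hmemK φ).2 hφ0)
  rw [walkMatrix_toEuclidean hX, inner_toEuclidean hX, ← normSq_eq_norm_toEuclidean_sq hX] at this
  rwa [div_le_iff₀ ((normSq_nonneg hX φ).lt_of_ne' hN)]

theorem le_smallestEig_of_eigen (hX : X.IsWSC n) {c : ℝ}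
    (h : ∀ φ : Finset V → ℝ, X.normSq 1 φ ≠ 0 →
      ∀ μ : ℝ, (∀ σ ∈ X.K 1, X.Mup' 1 φ σ = μ * φ σ) → c ≤ μ) :
    c ≤ X.smallestEig := by
  have hT := Matrix.isSymmetric_toEuclideanLin_iff.2 X.walkMatrix_isHermitian
  have heig : ∀ y ∈ (⊤ : Submodule ℝ (EuclideanSpace ℝ (X.K 1))), y ≠ 0 →
      ∀ μ : ℝ, X.walkMatrix.toEuclideanLin y = μ • y → c ≤ μ := by
    intro y _ hy0 μ hμ
    obtain ⟨φ, rfl⟩ := exists_toEuclidean_eq hX y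
    exact h φ (by simpa [normSq_eq_norm_toEuclidean_sq hX] using hy0) μ
      (Mup'_eq_of_walkMatrix_eq_smul hX hμ)
  have hone : X.normSq 1 (fun _ => 1) ≠ 0 := by
    simpa [normSq, inn, sum_K_one hX] using (hX.2.2.2.2.1 hX.1).ne'
  refine le_csInf ⟨_, _, hone, rfl⟩ ?_
  rintro _ ⟨φ, hN, rfl⟩
  have := hT.le_inner_of_le_eigenvalue (fun y _ => Submodule.mem_top) heig
    (Submodule.mem_top (x := X.toEuclidean φ))
  rw [walkMatrix_toEuclidean hX, inner_toEuclidean hX, ← normSq_eq_norm_toEuclidean_sq hX] at this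
  rwa [le_div_iff₀ ((normSq_nonneg hX φ).lt_of_ne' hN)]

theorem link_mean (hX : X.IsWSC n) (hv : v ∈ X.K 1) (φ : Finset V → ℝ) :
    ∑ η ∈ (X.link v).K 1, (X.link v).m η * φ η = X.m v * X.Mup' 1 φ v := by
  have := (m_pos hX hv).ne'
  rw [link_K_one hv, sum_filter, Mup'_one_apply, mul_sum]
  refine sum_congr rfl fun η _ => ?_
  unfold edgeWeight
  split_ifs
  · rw [link_m]
    field_simp
  · simp

theorem sum_link_mul_sub_eigen (hX : X.IsWSC n) (hn : 1 ≤ n) (hv : v ∈ X.K 1)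
    {φ : Finset V → ℝ} {μ : ℝ} (hφ : ∀ σ ∈ X.K 1, X.Mup' 1 φ σ = μ * φ σ) :
    ∑ η ∈ (X.link v).K 1, (X.link v).m η * (φ η - μ * φ v) = 0 := by
  rw [sum_mul_sub_const, link_mean hX hv, hφ v hv, sum_K_one (link_isWSC hX hv hn), link_m,
    union_empty]
  ring

theorem sum_link_edgeForm_sub_eigen (hX : X.IsWSC n) (hn : 2 ≤ n)
    {φ : Finset V → ℝ} {μ : ℝ} (hφ : ∀ σ ∈ X.K 1, X.Mup' 1 φ σ = μ * φ σ) :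
    ∑ v ∈ X.K 1, (X.link v).edgeForm (fun η => φ η - μ * φ v)
      = (μ - μ ^ 2) * X.normSq 1 φ := by
  have hlink : ∀ v ∈ X.K 1, (X.link v).edgeForm (fun η => φ η - μ * φ v)
      = (X.link v).edgeForm φ - μ ^ 2 * (X.m v * (φ v * φ v)) := fun v hv => by
    rw [edgeForm_sub_const (link_isWSC hX hv (by omega)) (by omega), link_mean hX hv, hφ v hv,
      link_m, union_empty]
    ring
  rw [sum_congr rfl hlink, sum_sub_distrib, sum_link_edgeForm hX hn, edgeForm_eq_of_eigen hX hφ,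
    ← mul_sum, normSq, inn]
  ring

theorem sum_link_normSq_sub_eigen (hX : X.IsWSC n) (hn : 1 ≤ n)
    {φ : Finset V → ℝ} {μ : ℝ} (hφ : ∀ σ ∈ X.K 1, X.Mup' 1 φ σ = μ * φ σ) :
    ∑ v ∈ X.K 1, (X.link v).normSq 1 (fun η => φ η - μ * φ v)
      = (1 - μ ^ 2) * X.normSq 1 φ := by
  have hlink : ∀ v ∈ X.K 1, (X.link v).normSq 1 (fun η => φ η - μ * φ v)
      = (X.link v).normSq 1 φ - μ ^ 2 * (X.m v * (φ v * φ v)) := fun v hv => by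
    rw [normSq_sub_const (link_isWSC hX hv hn), link_mean hX hv, hφ v hv, link_m, union_empty]
    ring
  rw [sum_congr rfl hlink, sum_sub_distrib, sum_link_normSq hX hn, ← mul_sum, normSq, inn]
  ring

theorem secondEig_le_of_forall_link (hX : X.IsWSC n) (hn : 2 ≤ n)
    (hconn : X.skeleton.Connected) {lam : ℝ} (hlam : lam < 1)
    (hlink : ∀ v ∈ X.K 1, (X.link v).secondEig ≤ lam) :
    X.secondEig ≤ lam / (1 - lam) := by
  refine secondEig_le_of_eigen hX (by omega) fun φ hφ0 hN μ hφ => ?_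
  have hμ := eigenvalue_lt_one hX (by omega) hconn hφ0 hN hφ
  have hgarland : (μ - μ ^ 2) * X.normSq 1 φ ≤ lam * (1 - μ ^ 2) * X.normSq 1 φ := by
    rw [← sum_link_edgeForm_sub_eigen hX hn hφ, mul_assoc,
      ← sum_link_normSq_sub_eigen hX (by omega) hφ, mul_sum]
    exact sum_le_sum fun v hv => edgeForm_le_of_secondEig_le (link_isWSC hX hv (by omega))
      (by omega) (hlink v hv) (sum_link_mul_sub_eigen hX (by omega) hv hφ)
  have := le_of_mul_le_mul_right hgarland ((normSq_nonneg hX φ).lt_of_ne' hN)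
  rw [le_div_iff₀ (by linarith)]
  nlinarith

theorem le_smallestEig_of_forall_link (hX : X.IsWSC n) (hn : 2 ≤ n) {lam : ℝ}
    (hlam : lam ≤ 0) (hlink : ∀ v ∈ X.K 1, lam ≤ (X.link v).smallestEig) :
    lam / (1 - lam) ≤ X.smallestEig := by
  refine le_smallestEig_of_eigen hX fun φ hN μ hφ => ?_
  have hgarland : lam * (1 - μ ^ 2) * X.normSq 1 φ ≤ (μ - μ ^ 2) * X.normSq 1 φ := by
    rw [← sum_link_edgeForm_sub_eigen hX hn hφ, mul_assoc,
      ← sum_link_normSq_sub_eigen hX (by omega) hφ, mul_sum]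
    exact sum_le_sum fun v hv => le_edgeForm_of_le_smallestEig (link_isWSC hX hv (by omega))
      (by omega) (hlink v hv) _
  have := le_of_mul_le_mul_right hgarland ((normSq_nonneg hX φ).lt_of_ne' hN)
  rcases le_or_gt 0 μ with hμ | hμ
  · exact (div_nonpos_of_nonpos_of_nonneg hlam (by linarith)).trans hμ
  rw [div_le_iff₀ (by linarith)]
  nlinarith

theorem union_mem_K_of_mem_link (hτ : τ ∈ X.K c) (hv : v ∈ (X.link τ).K 1) :
    τ ∪ v ∈ X.K (c + 1) := by
  obtain ⟨hv1, hdisj, hface⟩ := mem_link_K.1 hv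
  rw [mem_K, card_union_of_disjoint hdisj.symm, (mem_K.1 hτ).2, (mem_K.1 hv1).2]
  exact ⟨hface, rfl⟩

theorem finite_setOf_exists_mem_K (X : WSC V) (c : ℕ) (f : Finset V → ℝ) :
    {r : ℝ | ∃ τ ∈ X.K c, r = f τ}.Finite :=
  ((X.K c).finite_toSet.image f).subset fun _ ⟨τ, hτ, hr⟩ => ⟨τ, hτ, hr.symm⟩

theorem secondEig_le_mu (hτ : τ ∈ X.K c) : (X.link τ).secondEig ≤ X.mu c :=
  le_csSup (X.finite_setOf_exists_mem_K c _).bddAbove ⟨τ, hτ, rfl⟩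

theorem nu_le_smallestEig (hτ : τ ∈ X.K c) : X.nu c ≤ (X.link τ).smallestEig :=
  csInf_le (X.finite_setOf_exists_mem_K c _).bddBelow ⟨τ, hτ, rfl⟩

theorem mu_le_of_mu_succ_le (hX : X.IsWSC n) (hconn : X.LinksConnected n) (hc : c + 2 ≤ n)
    {lam : ℝ} (hlam : lam < 1) (hmu : X.mu (c + 1) ≤ lam) : X.mu c ≤ lam / (1 - lam) := by
  obtain ⟨τ₀, hτ₀⟩ := K_nonempty hX (c := c) (by omega)
  refine csSup_le ⟨_, τ₀, hτ₀, rfl⟩ ?_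
  rintro _ ⟨τ, hτ, rfl⟩
  refine secondEig_le_of_forall_link (link_isWSC hX hτ (by omega)) (by omega)
    (hconn c (by omega) τ hτ) hlam fun v hv => ?_
  rw [link_link hX (mem_K.1 hv).1]
  exact (secondEig_le_mu (union_mem_K_of_mem_link hτ hv)).trans hmu

theorem le_nu_of_le_nu_succ (hX : X.IsWSC n) (hc : c + 2 ≤ n) {lam : ℝ} (hlam : lam ≤ 0)
    (hnu : lam ≤ X.nu (c + 1)) : lam / (1 - lam) ≤ X.nu c := by
  obtain ⟨τ₀, hτ₀⟩ := K_nonempty hX (c := c) (by omega)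
  refine le_csInf ⟨_, τ₀, hτ₀, rfl⟩ ?_
  rintro _ ⟨τ, hτ, rfl⟩
  refine le_smallestEig_of_forall_link (link_isWSC hX hτ (by omega)) (by omega) hlam
    fun v hv => ?_
  rw [link_link hX (mem_K.1 hv).1]
  exact hnu.trans (nu_le_smallestEig (union_mem_K_of_mem_link hτ hv))

end WSC

open WSC
/-- If all links of `X` of dimension `≥ 1` (including `X` itself) are
connected, then for every `0 ≤ k ≤ n-2`: if `(n-1-k)·μ_{n-1} < 1` then
`μ_k ≤ μ_{n-1}/(1 - (n-1-k)·μ_{n-1})`, and if `ν_{n-1} ≤ 0` then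
`ν_k ≥ ν_{n-1}/(1 - (n-1-k)·ν_{n-1})`. -/
theorem spectral_descent {V : Type*} [DecidableEq V] (X : WSC V) (n : ℕ)
    (hX : X.IsWSC n) (hconn : X.LinksConnected n) (k : ℕ) (hk : k + 2 ≤ n) :
    (((n - 1 - k : ℕ) : ℝ) * X.mu (n - 1) < 1 →
      X.mu k ≤ X.mu (n - 1) / (1 - ((n - 1 - k : ℕ) : ℝ) * X.mu (n - 1))) ∧
    (X.nu (n - 1) ≤ 0 →
      X.nu k ≥ X.nu (n - 1) / (1 - ((n - 1 - k : ℕ) : ℝ) * X.nu (n - 1))) := by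
  have hidx : ∀ j < n - 1 - k, n - 1 - (j + 1) + 1 = n - 1 - j := fun j hj => by omega
  have hk' : n - 1 - (n - 1 - k) = k := by omega
  refine ⟨fun hmu => ?_, fun hnu => ?_⟩
  · have := le_div_one_sub_mul_of_step (b := fun j => X.mu (n - 1 - j))
      (fun j hj lam hlam hb => mu_le_of_mu_succ_le hX hconn (by omega) hlam (by rwa [hidx j hj]))
      (n - 1 - k) le_rfl (by simpa using hmu)
    simpa [hk'] using this
  · have := div_one_sub_mul_le_of_step (b := fun j => X.nu (n - 1 - j))
      (fun j hj lam hlam hb => le_nu_of_le_nu_succ hX (by omega) hlam (by rwa [hidx j hj]))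
      (by simpa using hnu) (n - 1 - k) le_rfl
    simpa [hk'] using this
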